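/- arXiv:cs/0611141 — 2 statements merged into one kernel-verified Lean document; each statement's English description precedes it below -/
import Mathlib

section
/- Let U be a finite abelian group with |U| ≥ 2, let d ≥ 1, and let H be a finite nonempty family of functions U → U that is exactly strongly universal. Then the derived family on vectors is exactly pairwise uniform: for all distinct vectors u, q ∈ U^d and all targets α, β ∈ U, the number of tuples (h₀, h₁, …, h_d) ∈ H^{d+1} such that F(h₀,…,h_d)(u) = α and F(h₀,…,h_d)(q) = β equals |H|^{d+1}/|U|². -/
/-- The derived (XOR/sum-combined) vector hash value:
`F h u = h₀ 0 + ∑_{j, u_j ≠ 0} h_j (u_j)`. -/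
def derivedHash {U : Type*} [AddCommGroup U] [DecidableEq U] {d : ℕ}
    (h : Fin (d + 1) → U → U) (u : Fin d → U) : U :=
  h 0 0 + ∑ j : Fin d, if u j ≠ 0 then h j.succ (u j) else 0

section Aux

open Finset Fintype

lemma sum_split {ι A : Type*} [Fintype ι] [DecidableEq ι] (k : ι) (H : Finset A)
    (f : (ι → A) → ℚ) :
    ∑ hh ∈ Fintype.piFinset (fun _ : ι => H), f hh
      = ∑ x ∈ H, ∑ g ∈ Fintype.piFinset (fun _ : {i : ι // i ≠ k} => H),
          f (fun i => if h : i = k then x else g ⟨i, h⟩) := by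
  rw [← Finset.sum_product']
  refine Finset.sum_bij' (fun hh _ => (hh k, fun i => hh i.1))
    (fun p _ => fun i => if h : i = k then p.1 else p.2 ⟨i, h⟩) ?_ ?_ ?_ ?_ ?_
  · intro a ha
    simp only [Fintype.mem_piFinset] at ha
    simp [Finset.mem_product, Fintype.mem_piFinset, ha]
  · intro p hp
    simp only [Finset.mem_product, Fintype.mem_piFinset] at hp
    simp only [Fintype.mem_piFinset]
    intro i
    by_cases h : i = k <;> simp [h, hp.1, hp.2 _]
  · intro a ha
    funext i
    by_cases h : i = k <;> simp [h]
  · intro p hp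
    ext i
    · simp
    · simp [(i : { i // i ≠ k }).2]
  · intro a ha
    congr 1
    funext i
    by_cases h : i = k
    · subst h; simp
    · simp [h]

variable {U : Type*} [AddCommGroup U] [Fintype U] [DecidableEq U]

lemma key2 (H : Finset (U → U))
    (huniv2 : ∀ a b : U, a ≠ b → ∀ α β : U,
      ((H.filter fun h => h a = α ∧ h b = β).card : ℚ)
        = (H.card : ℚ) / (Fintype.card U : ℚ) ^ 2)
    {ι : Type*} [Fintype ι] [DecidableEq ι] (k : ι) (a b : U) (hab : a ≠ b) (α β : U)
    (r s : ({i : ι // i ≠ k} → U → U) → U) :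
    (((Fintype.piFinset fun _ : ι => H).filter
        (fun hh => hh k a + r (fun i => hh i.1) = α ∧ hh k b + s (fun i => hh i.1) = β)).card : ℚ)
      = (H.card : ℚ) / (Fintype.card U : ℚ) ^ 2
        * (H.card : ℚ) ^ (Fintype.card {i : ι // i ≠ k}) := by
  rw [Finset.card_filter]
  push_cast
  rw [sum_split k, Finset.sum_comm]
  have main : ∀ g ∈ Fintype.piFinset (fun _ : {i : ι // i ≠ k} => H),
      (∑ x ∈ H, if ((fun i => if h : i = k then x else g ⟨i, h⟩) k a
            + r (fun i' => (fun i => if h : i = k then x else g ⟨i, h⟩) i'.1) = α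
          ∧ (fun i => if h : i = k then x else g ⟨i, h⟩) k b
            + s (fun i' => (fun i => if h : i = k then x else g ⟨i, h⟩) i'.1) = β)
          then (1 : ℚ) else 0)
        = (H.card : ℚ) / (Fintype.card U : ℚ) ^ 2 := by
    intro g _
    have hg1 : ∀ x : U → U,
        (fun i' : {i : ι // i ≠ k} => (fun i => if h : i = k then x else g ⟨i, h⟩) i'.1) = g := by
      intro x; funext i'; simp [i'.2]
    calc (∑ x ∈ H, _) = ∑ x ∈ H, if (x a = α - r g ∧ x b = β - s g) then (1:ℚ) else 0 := by
          refine Finset.sum_congr rfl fun x _ => ?_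
          simp only [hg1, eq_sub_iff_add_eq]; simp
      _ = ((H.filter fun x => x a = α - r g ∧ x b = β - s g).card : ℚ) := by
          rw [Finset.card_filter]; push_cast; rfl
      _ = (H.card : ℚ) / (Fintype.card U : ℚ) ^ 2 := huniv2 a b hab _ _
  rw [Finset.sum_congr rfl main, Finset.sum_const, Fintype.card_piFinset]
  simp [mul_comm, Finset.card_univ]

lemma key1 (H : Finset (U → U))
    (huniv1 : ∀ a α : U,
      ((H.filter fun h => h a = α).card : ℚ) = (H.card : ℚ) / (Fintype.card U : ℚ))
    {ι : Type*} [Fintype ι] [DecidableEq ι] (k : ι) (a : U) (α : U)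
    (r : ({i : ι // i ≠ k} → U → U) → U)
    (Q : ({i : ι // i ≠ k} → U → U) → Prop) [DecidablePred Q] :
    (((Fintype.piFinset fun _ : ι => H).filter
        (fun hh => hh k a + r (fun i => hh i.1) = α ∧ Q (fun i => hh i.1))).card : ℚ)
      = (H.card : ℚ) / (Fintype.card U : ℚ)
        * (((Fintype.piFinset fun _ : {i : ι // i ≠ k} => H).filter Q).card : ℚ) := by
  rw [Finset.card_filter]
  push_cast
  rw [sum_split k, Finset.sum_comm]
  have main : ∀ g ∈ Fintype.piFinset (fun _ : {i : ι // i ≠ k} => H),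
      (∑ x ∈ H, if ((fun i => if h : i = k then x else g ⟨i, h⟩) k a
            + r (fun i' => (fun i => if h : i = k then x else g ⟨i, h⟩) i'.1) = α
          ∧ Q (fun i' => (fun i => if h : i = k then x else g ⟨i, h⟩) i'.1))
          then (1 : ℚ) else 0)
        = if Q g then (H.card : ℚ) / (Fintype.card U : ℚ) else 0 := by
    intro g _
    have hg1 : ∀ x : U → U,
        (fun i' : {i : ι // i ≠ k} => (fun i => if h : i = k then x else g ⟨i, h⟩) i'.1) = g := by
      intro x; funext i'; simp [i'.2]
    calc (∑ x ∈ H, _) = ∑ x ∈ H, if (x a = α - r g ∧ Q g) then (1:ℚ) else 0 := by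
          refine Finset.sum_congr rfl fun x _ => ?_
          simp only [hg1, eq_sub_iff_add_eq]; simp
      _ = if Q g then (H.card : ℚ) / (Fintype.card U : ℚ) else 0 := by
          by_cases hQ : Q g
          · simp only [hQ, and_true, if_true]
            rw [← huniv1 a (α - r g), Finset.card_filter]; push_cast; rfl
          · simp [hQ]
  rw [Finset.sum_congr rfl main, ← Finset.sum_filter, Finset.sum_const, nsmul_eq_mul, mul_comm]

lemma key1' (H : Finset (U → U))
    (huniv1 : ∀ a α : U,
      ((H.filter fun h => h a = α).card : ℚ) = (H.card : ℚ) / (Fintype.card U : ℚ))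
    {ι : Type*} [Fintype ι] [DecidableEq ι] (k : ι) (a : U) (α : U)
    (r : ({i : ι // i ≠ k} → U → U) → U) :
    (((Fintype.piFinset fun _ : ι => H).filter
        (fun hh => hh k a + r (fun i => hh i.1) = α)).card : ℚ)
      = (H.card : ℚ) / (Fintype.card U : ℚ)
        * (H.card : ℚ) ^ (Fintype.card {i : ι // i ≠ k}) := by
  have := key1 H huniv1 k a α r (fun _ => True)
  simp only [and_true, Finset.filter_true] at this
  rw [this, Fintype.card_piFinset]
  simp [Finset.card_univ]

def restPart {d : ℕ} (u : Fin d → U) (j : Fin d)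
    (g : {i : Fin (d + 1) // i ≠ j.succ} → U → U) : U :=
  g ⟨0, (Fin.succ_ne_zero j).symm⟩ 0
    + ∑ i : Fin d, if h : i = j then 0
        else (if u i ≠ 0 then g ⟨i.succ, fun e => h (Fin.succ_injective d e)⟩ (u i) else 0)

lemma decomp {d : ℕ} (u : Fin d → U) (j : Fin d) (hh : Fin (d + 1) → U → U) :
    derivedHash hh u
      = (if u j ≠ 0 then hh j.succ (u j) else 0) + restPart u j (fun i => hh i.1) := by
  unfold derivedHash restPart
  set T : Fin d → U := fun i => if u i ≠ 0 then hh i.succ (u i) else 0 with hT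
  have hterm : ∀ i : Fin d, T i
      = (if h : i = j then 0 else (if u i ≠ 0 then hh i.succ (u i) else 0))
        + (if i = j then T j else 0) := by
    intro i
    by_cases h : i = j
    · subst h; simp [hT]
    · simp [h, hT, ite_not]
  have hsum : ∑ i : Fin d, T i
      = (∑ i : Fin d, if h : i = j then 0
          else (if u i ≠ 0 then hh i.succ (u i) else 0)) + T j := by
    rw [Finset.sum_congr rfl fun i _ => hterm i, Finset.sum_add_distrib,
      Finset.sum_ite_eq' Finset.univ j]
    simp
  rw [hsum]
  abel

lemma main_aux (H : Finset (U → U))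
    (huniv1 : ∀ a α : U,
      ((H.filter fun h => h a = α).card : ℚ) = (H.card : ℚ) / (Fintype.card U : ℚ))
    (huniv2 : ∀ a b : U, a ≠ b → ∀ α β : U,
      ((H.filter fun h => h a = α ∧ h b = β).card : ℚ)
        = (H.card : ℚ) / (Fintype.card U : ℚ) ^ 2)
    {d : ℕ} (hd : 1 ≤ d) (u q : Fin d → U) (j : Fin d)
    (hne : u j ≠ q j) (hj0 : u j ≠ 0) (α β : U) :
    ((((Fintype.piFinset fun _ : Fin (d + 1) => H)).filter
        (fun hh => derivedHash hh u = α ∧ derivedHash hh q = β)).card : ℚ)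
      = (H.card : ℚ) ^ (d + 1) / (Fintype.card U : ℚ) ^ 2 := by
  have hcard1 : Fintype.card {i : Fin (d + 1) // i ≠ j.succ} = d := by
    simp [Fintype.card_subtype_compl]
  by_cases hq0 : q j = 0
  · -- q j = 0 : use key1 then key1'
    have hfilt : (((Fintype.piFinset fun _ : Fin (d + 1) => H)).filter
          (fun hh => derivedHash hh u = α ∧ derivedHash hh q = β))
        = (((Fintype.piFinset fun _ : Fin (d + 1) => H)).filter
          (fun hh => hh j.succ (u j) + restPart u j (fun i => hh i.1) = α
            ∧ (fun g => restPart q j g = β) (fun i => hh i.1))) := by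
      refine Finset.filter_congr fun hh _ => ?_
      rw [decomp u j hh, decomp q j hh, if_pos hj0, if_neg (by simp [hq0]), zero_add]
    rw [hfilt, key1 H huniv1 j.succ (u j) α (restPart u j) (fun g => restPart q j g = β)]
    -- inner count
    set k0 : {i : Fin (d + 1) // i ≠ j.succ} := ⟨0, (Fin.succ_ne_zero j).symm⟩ with hk0
    have hfilt2 : ((Fintype.piFinset fun _ : {i : Fin (d + 1) // i ≠ j.succ} => H).filter
          (fun g => restPart q j g = β))
        = ((Fintype.piFinset fun _ : {i : Fin (d + 1) // i ≠ j.succ} => H).filter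
          (fun g => g k0 0 + (fun g' : {i' : {i : Fin (d + 1) // i ≠ j.succ} // i' ≠ k0} → U → U =>
              ∑ i : Fin d, if h : i = j then 0
                else (if q i ≠ 0 then
                  g' ⟨⟨i.succ, fun e => h (Fin.succ_injective d e)⟩,
                    fun e => Fin.succ_ne_zero i (congrArg Subtype.val e)⟩ (q i) else 0))
              (fun i' => g i'.1) = β)) := by
      refine Finset.filter_congr fun g _ => ?_
      unfold restPart
      exact Iff.rfl
    have hcard2 : Fintype.card {i' : {i : Fin (d + 1) // i ≠ j.succ} // i' ≠ k0} = d - 1 := by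
      simp [Fintype.card_subtype_compl, hcard1]
    rw [hfilt2, key1' H huniv1 k0 0 β
      (fun g' : {i' : {i : Fin (d + 1) // i ≠ j.succ} // i' ≠ k0} → U → U =>
        ∑ i : Fin d, if h : i = j then 0
          else (if q i ≠ 0 then
            g' ⟨⟨i.succ, fun e => h (Fin.succ_injective d e)⟩,
              fun e => Fin.succ_ne_zero i (congrArg Subtype.val e)⟩ (q i) else 0)), hcard2]
    have harith : ((d - 1) + 2 = d + 1) := by omega
    calc (H.card : ℚ) / (Fintype.card U : ℚ)
          * ((H.card : ℚ) / (Fintype.card U : ℚ) * (H.card : ℚ) ^ (d - 1))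
        = (H.card : ℚ) ^ (d - 1) * (H.card : ℚ) ^ 2 / (Fintype.card U : ℚ) ^ 2 := by ring
      _ = (H.card : ℚ) ^ (d + 1) / (Fintype.card U : ℚ) ^ 2 := by
          rw [← pow_add, harith]
  · -- q j ≠ 0 : use key2
    have hfilt : (((Fintype.piFinset fun _ : Fin (d + 1) => H)).filter
          (fun hh => derivedHash hh u = α ∧ derivedHash hh q = β))
        = (((Fintype.piFinset fun _ : Fin (d + 1) => H)).filter
          (fun hh => hh j.succ (u j) + restPart u j (fun i => hh i.1) = α
            ∧ hh j.succ (q j) + restPart q j (fun i => hh i.1) = β)) := by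
      refine Finset.filter_congr fun hh _ => ?_
      rw [decomp u j hh, decomp q j hh, if_pos hj0, if_pos hq0]
    rw [hfilt, key2 H huniv2 j.succ (u j) (q j) hne α β (restPart u j) (restPart q j), hcard1,
      div_mul_eq_mul_div, ← pow_succ']

end Aux

/-- If `H` is an exactly strongly universal family of hash functions `U → U`,
then the derived family on vectors is exactly pairwise uniform. -/
theorem derived_family_exactly_pairwise_uniform
    {U : Type*} [AddCommGroup U] [Fintype U] [DecidableEq U]
    (hU : 2 ≤ Fintype.card U) {d : ℕ} (hd : 1 ≤ d)
    (H : Finset (U → U)) (hHne : H.Nonempty)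
    (huniv1 : ∀ a α : U,
      ((H.filter fun h => h a = α).card : ℚ) = (H.card : ℚ) / (Fintype.card U : ℚ))
    (huniv2 : ∀ a b : U, a ≠ b → ∀ α β : U,
      ((H.filter fun h => h a = α ∧ h b = β).card : ℚ)
        = (H.card : ℚ) / (Fintype.card U : ℚ) ^ 2)
    (u q : Fin d → U) (huq : u ≠ q) (α β : U) :
    ((((Fintype.piFinset fun _ : Fin (d + 1) => H)).filter
        (fun hh => derivedHash hh u = α ∧ derivedHash hh q = β)).card : ℚ)
      = (H.card : ℚ) ^ (d + 1) / (Fintype.card U : ℚ) ^ 2 := by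
  obtain ⟨j, hne⟩ := Function.ne_iff.mp huq
  by_cases hj0 : u j = 0
  · have hq0 : q j ≠ 0 := fun h => hne (hj0.trans h.symm)
    rw [show (((Fintype.piFinset fun _ : Fin (d + 1) => H)).filter
        (fun hh => derivedHash hh u = α ∧ derivedHash hh q = β))
      = (((Fintype.piFinset fun _ : Fin (d + 1) => H)).filter
        (fun hh => derivedHash hh q = β ∧ derivedHash hh u = α)) from
      Finset.filter_congr fun hh _ => and_comm]
    exact main_aux H huniv1 huniv2 hd q u j (Ne.symm hne) hq0 β α
  · exact main_aux H huniv1 huniv2 hd u q j hne hj0 α β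
end

section
/- Let U be a finite abelian group with |U| ≥ 2, let d ≥ 1, let c ≥ 1 be a real number, and let H be a finite nonempty family of functions U → U that is strongly universal with constant c. Then for all distinct vectors u, q ∈ U^d and all targets α, β ∈ U, the fraction of tuples (h₀, h₁, …, h_d) ∈ H^{d+1} (out of all |H|^{d+1} tuples) such that F(h₀,…,h_d)(u) = α and F(h₀,…,h_d)(q) = β is at most c²/|U|². -/
section Aux

open Finset Function

private lemma sum_update_eq' {ι W : Type*} [Fintype ι] [DecidableEq ι] [DecidableEq W]
    (H : Finset W) (i : ι) (f : (ι → W) → ℝ) :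
    ∑ hh ∈ Fintype.piFinset (fun _ : ι => H), ∑ w ∈ H, f (Function.update hh i w)
      = H.card * ∑ hh ∈ Fintype.piFinset (fun _ : ι => H), f hh := by
  rw [← Finset.sum_product']
  have : (H.card : ℝ) * ∑ hh ∈ Fintype.piFinset (fun _ : ι => H), f hh
      = ∑ p ∈ (Fintype.piFinset (fun _ : ι => H)) ×ˢ H, f p.1 := by
    rw [Finset.sum_product, Finset.mul_sum]
    simp [Finset.sum_const, mul_comm]
  rw [this]
  apply Finset.sum_nbij' (i := fun p => (Function.update p.1 i p.2, p.1 i))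
    (j := fun p => (Function.update p.1 i p.2, p.1 i))
  · intro p hp
    simp only [Finset.mem_product, Fintype.mem_piFinset] at hp ⊢
    refine ⟨fun k => ?_, hp.1 i⟩
    by_cases h : k = i
    · subst h; simpa using hp.2
    · simpa [Function.update_of_ne h] using hp.1 k
  · intro p hp
    simp only [Finset.mem_product, Fintype.mem_piFinset] at hp ⊢
    refine ⟨fun k => ?_, hp.1 i⟩
    by_cases h : k = i
    · subst h; simpa using hp.2
    · simpa [Function.update_of_ne h] using hp.1 k
  · intro p hp
    simp [Function.update_idem, Function.update_eq_self]
  · intro p hp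
    simp [Function.update_idem, Function.update_eq_self]
  · intro p hp
    simp

private lemma two_coord_bound {ι W : Type*} [Fintype ι] [DecidableEq ι] [DecidableEq W]
    (H : Finset W) (hHne : H.Nonempty)
    (P Q₁ Q₂ : (ι → W) → Prop) [DecidablePred P] [DecidablePred Q₁] [DecidablePred Q₂]
    (i₁ i₂ : ι) (t₁ t₂ : ℝ) (ht₁ : 0 ≤ t₁) (ht₂ : 0 ≤ t₂)
    (hP : ∀ hh, P hh → Q₁ hh ∧ Q₂ hh)
    (hinv : ∀ hh w, Q₁ (Function.update hh i₂ w) ↔ Q₁ hh)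
    (h₂ : ∀ hh ∈ Fintype.piFinset (fun _ : ι => H),
      ((H.filter fun w => Q₂ (Function.update hh i₂ w)).card : ℝ) ≤ t₂ * H.card)
    (h₁ : ∀ hh ∈ Fintype.piFinset (fun _ : ι => H),
      ((H.filter fun w => Q₁ (Function.update hh i₁ w)).card : ℝ) ≤ t₁ * H.card) :
    (((Fintype.piFinset (fun _ : ι => H)).filter P).card : ℝ)
      ≤ t₁ * t₂ * (H.card : ℝ) ^ (Fintype.card ι) := by
  classical
  have hHpos : (0 : ℝ) < H.card := by exact_mod_cast Finset.card_pos.mpr hHne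
  set pi := Fintype.piFinset (fun _ : ι => H) with hpi
  have hpicard : ((pi.card : ℝ)) = (H.card : ℝ) ^ (Fintype.card ι) := by
    rw [hpi, Fintype.card_piFinset]
    push_cast
    simp
  have step0 : ((pi.filter P).card : ℝ) ≤ ((pi.filter fun hh => Q₁ hh ∧ Q₂ hh).card : ℝ) := by
    have hsub : pi.filter P ⊆ pi.filter fun hh => Q₁ hh ∧ Q₂ hh := by
      intro x hx
      simp only [Finset.mem_filter] at hx ⊢
      exact ⟨hx.1, hP x hx.2⟩
    exact_mod_cast Finset.card_le_card hsub
  have cardsum : ∀ (R : (ι → W) → Prop) (_ : DecidablePred R),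
      ((pi.filter R).card : ℝ) = ∑ hh ∈ pi, if R hh then (1:ℝ) else 0 := by
    intro R _
    rw [Finset.sum_boole]
  have step1 : ((pi.filter fun hh => Q₁ hh ∧ Q₂ hh).card : ℝ)
      ≤ t₂ * ((pi.filter Q₁).card : ℝ) := by
    have key := sum_update_eq' H i₂ (fun hh => if Q₁ hh ∧ Q₂ hh then (1:ℝ) else 0)
    have lhsbound : ∑ hh ∈ pi, ∑ w ∈ H,
        (if Q₁ (Function.update hh i₂ w) ∧ Q₂ (Function.update hh i₂ w) then (1:ℝ) else 0)
        ≤ ∑ hh ∈ pi, (if Q₁ hh then (1:ℝ) else 0) * (t₂ * H.card) := by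
      apply Finset.sum_le_sum
      intro hh hhmem
      have : ∑ w ∈ H, (if Q₁ (Function.update hh i₂ w) ∧ Q₂ (Function.update hh i₂ w) then (1:ℝ) else 0)
          = (if Q₁ hh then (1:ℝ) else 0) * ∑ w ∈ H, (if Q₂ (Function.update hh i₂ w) then (1:ℝ) else 0) := by
        rw [Finset.mul_sum]
        apply Finset.sum_congr rfl
        intro w _
        simp only [hinv hh w]
        by_cases h1 : Q₁ hh <;> simp [h1]
      rw [this]
      have hsum : ∑ w ∈ H, (if Q₂ (Function.update hh i₂ w) then (1:ℝ) else 0)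
          = ((H.filter fun w => Q₂ (Function.update hh i₂ w)).card : ℝ) := by
        rw [Finset.sum_boole]
      rw [hsum]
      by_cases h1 : Q₁ hh
      · simpa [h1] using h₂ hh hhmem
      · simp [h1]
    have rhseq : ∑ hh ∈ pi, (if Q₁ hh then (1:ℝ) else 0) * (t₂ * H.card)
        = ((pi.filter Q₁).card : ℝ) * (t₂ * H.card) := by
      rw [← Finset.sum_mul, ← cardsum Q₁ inferInstance]
    rw [cardsum _ inferInstance]
    have hkey : (H.card : ℝ) * ∑ hh ∈ pi, (if Q₁ hh ∧ Q₂ hh then (1:ℝ) else 0)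
        ≤ ((pi.filter Q₁).card : ℝ) * (t₂ * H.card) := by
      rw [← key]; rw [← rhseq] at *; exact lhsbound
    nlinarith [hkey, hHpos]
  have step2 : ((pi.filter Q₁).card : ℝ) ≤ t₁ * (H.card : ℝ) ^ (Fintype.card ι) := by
    have key := sum_update_eq' H i₁ (fun hh => if Q₁ hh then (1:ℝ) else 0)
    have lhsbound : ∑ hh ∈ pi, ∑ w ∈ H,
        (if Q₁ (Function.update hh i₁ w) then (1:ℝ) else 0)
        ≤ ∑ hh ∈ pi, t₁ * H.card := by
      apply Finset.sum_le_sum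
      intro hh hhmem
      have hsum : ∑ w ∈ H, (if Q₁ (Function.update hh i₁ w) then (1:ℝ) else 0)
          = ((H.filter fun w => Q₁ (Function.update hh i₁ w)).card : ℝ) := by
        rw [Finset.sum_boole]
      rw [hsum]; exact h₁ hh hhmem
    rw [cardsum Q₁ inferInstance]
    have : (H.card:ℝ) * ∑ hh ∈ pi, (if Q₁ hh then (1:ℝ) else 0)
        ≤ (pi.card : ℝ) * (t₁ * H.card) := by
      rw [← key]
      simpa [Finset.sum_const, nsmul_eq_mul] using lhsbound
    rw [hpicard] at this
    nlinarith [this, hHpos]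
  calc ((pi.filter P).card : ℝ) ≤ _ := step0
    _ ≤ t₂ * ((pi.filter Q₁).card : ℝ) := step1
    _ ≤ t₂ * (t₁ * (H.card : ℝ) ^ (Fintype.card ι)) := by
        apply mul_le_mul_of_nonneg_left step2 ht₂
    _ = t₁ * t₂ * (H.card : ℝ) ^ (Fintype.card ι) := by ring

private lemma derivedHash_update_succ {U : Type*} [AddCommGroup U] [DecidableEq U] {d : ℕ}
    (hh : Fin (d + 1) → U → U) (j : Fin d) (w : U → U) (u : Fin d → U) :
    derivedHash (Function.update hh j.succ w) u
      = (if u j ≠ 0 then w (u j) else 0)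
        + (hh 0 0 + ∑ k ∈ Finset.univ.erase j, if u k ≠ 0 then hh k.succ (u k) else 0) := by
  unfold derivedHash
  rw [Function.update_of_ne (Fin.succ_ne_zero j).symm]
  rw [← Finset.add_sum_erase _ _ (Finset.mem_univ j)]
  rw [Function.update_self]
  have : ∑ k ∈ Finset.univ.erase j, (if u k ≠ 0 then (Function.update hh j.succ w) k.succ (u k) else 0)
      = ∑ k ∈ Finset.univ.erase j, (if u k ≠ 0 then hh k.succ (u k) else 0) := by
    apply Finset.sum_congr rfl
    intro k hk
    have hkj : k ≠ j := (Finset.mem_erase.mp hk).1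
    rw [Function.update_of_ne (fun h => hkj (Fin.succ_injective _ h))]
  rw [this]
  abel

private lemma derivedHash_eq_succ {U : Type*} [AddCommGroup U] [DecidableEq U] {d : ℕ}
    (hh : Fin (d + 1) → U → U) (j : Fin d) (u : Fin d → U) :
    derivedHash hh u
      = (if u j ≠ 0 then hh j.succ (u j) else 0)
        + (hh 0 0 + ∑ k ∈ Finset.univ.erase j, if u k ≠ 0 then hh k.succ (u k) else 0) := by
  have := derivedHash_update_succ hh j (hh j.succ) u
  rwa [Function.update_eq_self] at this

private lemma derivedHash_update_zero {U : Type*} [AddCommGroup U] [DecidableEq U] {d : ℕ}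
    (hh : Fin (d + 1) → U → U) (w : U → U) (u : Fin d → U) :
    derivedHash (Function.update hh 0 w) u
      = w 0 + ∑ k : Fin d, if u k ≠ 0 then hh k.succ (u k) else 0 := by
  unfold derivedHash
  rw [Function.update_self]
  refine congrArg (w 0 + ·) ?_
  apply Finset.sum_congr rfl
  intro k _
  rw [Function.update_of_ne (Fin.succ_ne_zero k)]

end Aux

/-- If `H` is a strongly universal family of hash functions `U → U` with constant `c`,
then for distinct vectors `u ≠ q` the fraction of tuples `(h₀, …, h_d) ∈ H^(d+1)`
hashing `u` to `α` and `q` to `β` is at most `c² / |U|²`. -/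
theorem derived_family_pairwise_bound
    {U : Type*} [AddCommGroup U] [Fintype U] [DecidableEq U]
    (hU : 2 ≤ Fintype.card U) {d : ℕ} (hd : 1 ≤ d)
    (c : ℝ) (hc : 1 ≤ c)
    (H : Finset (U → U)) (hHne : H.Nonempty)
    (huniv1 : ∀ a α : U,
      ((H.filter fun h => h a = α).card : ℝ) / (H.card : ℝ) ≤ c / (Fintype.card U : ℝ))
    (huniv2 : ∀ a b : U, a ≠ b → ∀ α β : U,
      ((H.filter fun h => h a = α ∧ h b = β).card : ℝ) / (H.card : ℝ)
        ≤ c / (Fintype.card U : ℝ) ^ 2)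
    (u q : Fin d → U) (huq : u ≠ q) (α β : U) :
    ((((Fintype.piFinset fun _ : Fin (d + 1) => H)).filter
        (fun hh => derivedHash hh u = α ∧ derivedHash hh q = β)).card : ℝ)
        / (H.card : ℝ) ^ (d + 1)
      ≤ c ^ 2 / (Fintype.card U : ℝ) ^ 2 := by
  classical
  have hHpos : (0 : ℝ) < H.card := by exact_mod_cast Finset.card_pos.mpr hHne
  have hUpos : (0 : ℝ) < Fintype.card U := by
    have : (0:ℕ) < Fintype.card U := by omega
    exact_mod_cast this
  have hc0 : (0:ℝ) ≤ c := le_trans zero_le_one hc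
  -- filter-card forms of universality
  have hfilt1 : ∀ a A : U, ((H.filter fun w => w a = A).card : ℝ)
      ≤ (c / Fintype.card U) * H.card := by
    intro a A
    have := huniv1 a A
    rw [div_le_iff₀ hHpos] at this
    simpa [mul_comm] using this
  have hfilt2 : ∀ a b : U, a ≠ b → ∀ A B : U,
      ((H.filter fun w => w a = A ∧ w b = B).card : ℝ)
        ≤ (c / (Fintype.card U : ℝ) ^ 2) * H.card := by
    intro a b hab A B
    have := huniv2 a b hab A B
    rw [div_le_iff₀ hHpos] at this
    simpa [mul_comm] using this
  have ht1 : (0:ℝ) ≤ c / Fintype.card U := div_nonneg hc0 (le_of_lt hUpos)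
  have ht2 : (0:ℝ) ≤ c / (Fintype.card U : ℝ) ^ 2 := div_nonneg hc0 (by positivity)
  obtain ⟨j, hj⟩ := Function.ne_iff.mp huq
  set pi := Fintype.piFinset fun _ : Fin (d + 1) => H with hpi
  set P : (Fin (d+1) → U → U) → Prop := fun hh => derivedHash hh u = α ∧ derivedHash hh q = β
    with hP
  rw [div_le_div_iff₀ (by positivity) (by positivity)]
  have hcardfin : Fintype.card (Fin (d+1)) = d + 1 := Fintype.card_fin _
  -- key counting bound
  have main : ((pi.filter P).card : ℝ) ≤ (c^2 / (Fintype.card U : ℝ)^2) * (H.card : ℝ)^(d+1) := by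
    by_cases hcase : u j ≠ 0 ∧ q j ≠ 0
    · -- Case A : both entries nonzero, use pairwise universality at coordinate j.succ
      obtain ⟨huj, hqj⟩ := hcase
      have bound := two_coord_bound H hHne P (fun _ => True) P 0 j.succ
        1 (c / (Fintype.card U : ℝ)^2) zero_le_one ht2
        (fun hh h => ⟨trivial, h⟩) (fun hh w => by simp)
        (by
          intro hh hhmem
          have hfe : (H.filter fun w => P (Function.update hh j.succ w))
              = H.filter fun w =>
                  w (u j) = α - (hh 0 0 + ∑ k ∈ Finset.univ.erase j, if u k ≠ 0 then hh k.succ (u k) else 0)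
                ∧ w (q j) = β - (hh 0 0 + ∑ k ∈ Finset.univ.erase j, if q k ≠ 0 then hh k.succ (q k) else 0) := by
            apply Finset.filter_congr
            intro w _
            rw [hP]
            simp only [derivedHash_update_succ hh j w u, derivedHash_update_succ hh j w q,
              if_pos huj, if_pos hqj]
            constructor
            · rintro ⟨h1, h2⟩
              exact ⟨by rw [← h1]; abel, by rw [← h2]; abel⟩
            · rintro ⟨h1, h2⟩
              exact ⟨by rw [h1]; abel, by rw [h2]; abel⟩
          rw [hfe]
          exact hfilt2 (u j) (q j) hj _ _)
        (by
          intro hh hhmem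
          simp [Finset.filter_true, le_refl, hHpos.le])
      rw [hcardfin] at bound
      refine bound.trans ?_
      rw [one_mul]
      apply mul_le_mul_of_nonneg_right ?_ (by positivity)
      gcongr
      nlinarith
    · -- Case B : exactly one of u j, q j is nonzero
      -- helper applicable to both sub-cases
      have caseB : ∀ (v r : Fin d → U) (γ δ : U), v j ≠ 0 → r j = 0 →
          (∀ hh, P hh → derivedHash hh r = δ ∧ derivedHash hh v = γ) →
          ((pi.filter P).card : ℝ) ≤ (c^2 / (Fintype.card U : ℝ)^2) * (H.card : ℝ)^(d+1) := by
        intro v r γ δ hv hr hPvr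
        have bound := two_coord_bound H hHne P
          (fun hh => derivedHash hh r = δ) (fun hh => derivedHash hh v = γ) 0 j.succ
          (c / (Fintype.card U : ℝ)) (c / (Fintype.card U : ℝ)) ht1 ht1
          hPvr
          (by
            intro hh w
            show derivedHash (Function.update hh j.succ w) r = δ ↔ derivedHash hh r = δ
            rw [derivedHash_update_succ hh j w r, derivedHash_eq_succ hh j r]
            simp [hr])
          (by
            intro hh hhmem
            have hfe : (H.filter fun w => derivedHash (Function.update hh j.succ w) v = γ)
                = H.filter fun w =>
                    w (v j) = γ - (hh 0 0 + ∑ k ∈ Finset.univ.erase j, if v k ≠ 0 then hh k.succ (v k) else 0) := by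
              apply Finset.filter_congr
              intro w _
              rw [derivedHash_update_succ hh j w v, if_pos hv]
              constructor
              · intro h1; rw [← h1]; abel
              · intro h1; rw [h1]; abel
            rw [hfe]
            exact hfilt1 (v j) _)
          (by
            intro hh hhmem
            have hfe : (H.filter fun w => derivedHash (Function.update hh 0 w) r = δ)
                = H.filter fun w =>
                    w 0 = δ - (∑ k : Fin d, if r k ≠ 0 then hh k.succ (r k) else 0) := by
              apply Finset.filter_congr
              intro w _
              rw [derivedHash_update_zero hh w r]
              constructor
              · intro h1; rw [← h1]; abel
              · intro h1; rw [h1]; abel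
            rw [hfe]
            exact hfilt1 0 _)
        rw [hcardfin] at bound
        refine bound.trans ?_
        apply mul_le_mul_of_nonneg_right ?_ (by positivity)
        rw [div_mul_div_comm]
        gcongr <;> nlinarith
      rcases not_and_or.mp hcase with h0 | h0
      · -- u j = 0, so q j ≠ 0
        have huj : u j = 0 := not_not.mp h0
        have hqj : q j ≠ 0 := by
          intro h; exact hj (by rw [huj, h])
        exact caseB q u β α hqj huj (fun hh h => ⟨h.1, h.2⟩)
      · -- q j = 0, so u j ≠ 0
        have hqj : q j = 0 := not_not.mp h0
        have huj : u j ≠ 0 := by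
          intro h; exact hj (by rw [hqj, h])
        exact caseB u q α β huj hqj (fun hh h => ⟨h.2, h.1⟩)
  calc ((pi.filter P).card : ℝ) * ((Fintype.card U : ℝ)^2)
      ≤ ((c^2 / (Fintype.card U : ℝ)^2) * (H.card : ℝ)^(d+1)) * ((Fintype.card U : ℝ)^2) := by
        apply mul_le_mul_of_nonneg_right main (by positivity)
    _ = c^2 * ((H.card)^(d+1)) * (((Fintype.card U : ℝ)^2) / ((Fintype.card U : ℝ)^2)) := by ring
    _ = c^2 * ((H.card)^(d+1)) := by rw [div_self (by positivity)]; ring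
    _ = c^2 * ((H.card:ℝ)^(d+1)) := by norm_num
end
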